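/- Noiseless bias bound for the kernel ridge estimator: let λ > 0, Φ a real n×d matrix with rows φ_1,…,φ_n ∈ ℝ^d, θ* ∈ ℝ^d, and r ∈ ℝ^n defined by r i = ⟪φ_i, θ*⟫. Let K = Φ Φᵀ, and for x ∈ ℝ^d let v = Φ x. Then |⟪x, θ*⟫ - vᵀ (K + λ•1)⁻¹ r| ≤ ‖θ*‖ * Real.sqrt (⟪x, x⟫ - vᵀ (K + λ•1)⁻¹ v). -/

import Mathlib

/-! Write `A = ΦΦᵀ + λI` and `w = A⁻¹Φx`. Since the rewards are `r = Φθ*`, the prediction error is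
`⟪x - Φᵀw, θ*⟫`, so by Cauchy–Schwarz it suffices to bound `‖x - Φᵀw‖²`. Expanding and using
`ΦΦᵀw = Φx - λw` gives `‖x - Φᵀw‖² = ‖x‖² - ⟪Φx, w⟫ - λ‖w‖²`, which is at most the
posterior variance `‖x‖² - ⟪Φx, A⁻¹Φx⟫`. -/

open Matrix Finset

section

variable {m k : Type*} [Fintype m] [Fintype k]

theorem posDef_mul_transpose_add_smul_one [DecidableEq m] (Φ : Matrix m k ℝ) {lam : ℝ}
    (hlam : 0 < lam) : (Φ * Φᵀ + lam • (1 : Matrix m m ℝ)).PosDef :=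
  PosDef.posSemidef_add (by simpa using posSemidef_self_mul_conjTranspose Φ)
    (PosDef.one.smul hlam)

theorem dotProduct_mulVec_of_transpose_eq {B : Matrix m m ℝ} (hB : Bᵀ = B) (v z : m → ℝ) :
    v ⬝ᵥ (B *ᵥ z) = (B *ᵥ v) ⬝ᵥ z := by
  rw [dotProduct_mulVec, ← mulVec_transpose, hB]

theorem abs_dotProduct_le_sqrt_mul_sqrt (u θ : k → ℝ) :
    |u ⬝ᵥ θ| ≤ √(∑ j, θ j ^ 2) * √(u ⬝ᵥ u) := by
  have hcs : (u ⬝ᵥ θ) ^ 2 ≤ (∑ j, θ j ^ 2) * ∑ j, u j ^ 2 := by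
    simpa only [dotProduct, mul_comm] using sum_mul_sq_le_sq_mul_sq univ θ u
  rw [← Real.sqrt_mul (sum_nonneg fun j _ ↦ sq_nonneg (θ j))]
  exact Real.abs_le_sqrt (by simpa only [dotProduct, sq] using hcs)

theorem dotProduct_self_sub_transpose_mulVec (Φ : Matrix m k ℝ) (x : k → ℝ) (w : m → ℝ) :
    (x - Φᵀ *ᵥ w) ⬝ᵥ (x - Φᵀ *ᵥ w) =
      x ⬝ᵥ x - 2 * ((Φ *ᵥ x) ⬝ᵥ w) + w ⬝ᵥ ((Φ * Φᵀ) *ᵥ w) := by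
  have hcross : x ⬝ᵥ (Φᵀ *ᵥ w) = (Φ *ᵥ x) ⬝ᵥ w := by
    rw [dotProduct_mulVec, vecMul_transpose]
  have hquad : (Φᵀ *ᵥ w) ⬝ᵥ (Φᵀ *ᵥ w) = w ⬝ᵥ ((Φ * Φᵀ) *ᵥ w) := by
    rw [← mulVec_mulVec, dotProduct_mulVec w Φ, ← mulVec_transpose]
  rw [sub_dotProduct, dotProduct_sub, dotProduct_sub, dotProduct_comm (Φᵀ *ᵥ w) x, hcross, hquad]
  ring

theorem ridge_residual_dotProduct_self_le [DecidableEq m] (Φ : Matrix m k ℝ) {lam : ℝ}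
    (hlam : 0 ≤ lam) (x : k → ℝ) {w : m → ℝ}
    (hw : (Φ * Φᵀ + lam • (1 : Matrix m m ℝ)) *ᵥ w = Φ *ᵥ x) :
    (x - Φᵀ *ᵥ w) ⬝ᵥ (x - Φᵀ *ᵥ w) ≤ x ⬝ᵥ x - (Φ *ᵥ x) ⬝ᵥ w := by
  have hquad : w ⬝ᵥ ((Φ * Φᵀ) *ᵥ w) = (Φ *ᵥ x) ⬝ᵥ w - lam * (w ⬝ᵥ w) := by
    rw [← hw, add_mulVec, smul_mulVec, one_mulVec, add_dotProduct, smul_dotProduct, smul_eq_mul,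
      dotProduct_comm w]
    ring
  have hww : 0 ≤ w ⬝ᵥ w := by simpa using dotProduct_star_self_nonneg w
  rw [dotProduct_self_sub_transpose_mulVec, hquad]
  linarith [mul_nonneg hlam hww]

end

theorem noiseless_bias_bound (n d : ℕ) (lam : ℝ) (hlam : 0 < lam)
    (Φ : Matrix (Fin n) (Fin d) ℝ) (θs : Fin d → ℝ) (x : Fin d → ℝ)
    (r : Fin n → ℝ) (hr : ∀ i, r i = Φ i ⬝ᵥ θs) :
    |x ⬝ᵥ θs -
        (Φ *ᵥ x) ⬝ᵥ ((Φ * Φᵀ + lam • (1 : Matrix (Fin n) (Fin n) ℝ))⁻¹ *ᵥ r)| ≤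
      Real.sqrt (∑ j, (θs j) ^ 2) *
        Real.sqrt (x ⬝ᵥ x -
          (Φ *ᵥ x) ⬝ᵥ ((Φ * Φᵀ + lam • (1 : Matrix (Fin n) (Fin n) ℝ))⁻¹ *ᵥ (Φ *ᵥ x))) := by
  set A := Φ * Φᵀ + lam • (1 : Matrix (Fin n) (Fin n) ℝ)
  have hA : A.PosDef := posDef_mul_transpose_add_smul_one Φ hlam
  have hAinv : A⁻¹ᵀ = A⁻¹ := by rw [transpose_nonsing_inv, show Aᵀ = A from hA.isHermitian]
  set w := A⁻¹ *ᵥ (Φ *ᵥ x)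
  have hw : A *ᵥ w = Φ *ᵥ x := by
    rw [mulVec_mulVec, mul_nonsing_inv A hA.det_pos.ne'.isUnit, one_mulVec]
  have herror : x ⬝ᵥ θs - (Φ *ᵥ x) ⬝ᵥ (A⁻¹ *ᵥ r) = (x - Φᵀ *ᵥ w) ⬝ᵥ θs := by
    rw [dotProduct_mulVec_of_transpose_eq hAinv, show r = Φ *ᵥ θs from funext hr,
      dotProduct_mulVec, ← mulVec_transpose, sub_dotProduct]
  rw [herror]
  exact (abs_dotProduct_le_sqrt_mul_sqrt _ θs).trans <| mul_le_mul_of_nonneg_left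
    (Real.sqrt_le_sqrt (ridge_residual_dotProduct_self_le Φ hlam.le x hw)) (Real.sqrt_nonneg _)
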